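/- arXiv:2203.09220 — 5 statements merged into one kernel-verified Lean document; each statement's English description precedes it below -/
import Mathlib

section
/- For J > 0 and ρ ∈ (0,1), the function σ_J(ρ) = ρ(1-ρ)/J satisfies the ODE σ'(ρ) = (f''(ρ)σ(ρ)² + (f(ρ) + 2ρ f'(ρ))σ(ρ) + ρ² f(ρ)) / (ρ f(ρ)), where f(ρ) = ρ(1-ρ)^J. -/
noncomputable def fJ (J : ℝ) : ℝ → ℝ := fun ρ => ρ * (1 - ρ) ^ J

noncomputable def sigmaJ (J : ℝ) : ℝ → ℝ := fun ρ => ρ * (1 - ρ) / J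

/-! With `A = (1 - ρ) ^ (J - 2)` one has `f = A ρ (1 - ρ)²`, `f' = A (1 - ρ) (1 - (J + 1) ρ)` and
`f'' = A J ((J + 1) ρ - 2)`. Every term of the numerator then carries the factor `A ρ² (1 - ρ)²`,
which is `ρ f`, and what remains is `(1 - 2ρ) / J = σ'`. -/

lemma hasDerivAt_one_sub_rpow (p : ℝ) {x : ℝ} (hx : x < 1) :
    HasDerivAt (fun y : ℝ => (1 - y) ^ p) (-(p * (1 - x) ^ (p - 1))) x := by
  have h := ((hasDerivAt_id x).const_sub 1).rpow_const (p := p) (Or.inl (by simp; linarith))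
  simpa using h

lemma one_sub_rpow_eq_mul {x : ℝ} (hx : x < 1) (p : ℝ) :
    (1 - x) ^ p = (1 - x) ^ (p - 1) * (1 - x) := by
  rw [← Real.rpow_add_one (by linarith), sub_add_cancel]

namespace fJ

variable {J x : ℝ}

lemma hasDerivAt (hx : x < 1) :
    HasDerivAt (fJ J) ((1 - x) ^ (J - 1) * (1 - (J + 1) * x)) x := by
  have h := (hasDerivAt_id x).mul (hasDerivAt_one_sub_rpow J hx)
  refine h.congr_deriv ?_
  rw [one_sub_rpow_eq_mul hx J]
  simp only [id_eq]
  ring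

lemma deriv_eq (hx : x < 1) : deriv (fJ J) x = (1 - x) ^ (J - 1) * (1 - (J + 1) * x) :=
  (hasDerivAt hx).deriv

lemma hasDerivAt_deriv (hx : x < 1) :
    HasDerivAt (deriv (fJ J)) (J * (1 - x) ^ (J - 2) * ((J + 1) * x - 2)) x := by
  have hderiv : deriv (fJ J) =ᶠ[nhds x] fun y => (1 - y) ^ (J - 1) * (1 - (J + 1) * y) :=
    Filter.eventually_of_mem (Iio_mem_nhds hx) fun y hy => deriv_eq hy
  have h := (hasDerivAt_one_sub_rpow (J - 1) hx).mul (((hasDerivAt_id x).const_mul (J + 1)).const_sub 1)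
  refine (h.congr_of_eventuallyEq hderiv).congr_deriv ?_
  rw [one_sub_rpow_eq_mul hx (J - 1), show J - 1 - 1 = J - 2 by ring]
  simp only [id_eq]
  ring

end fJ

lemma sigmaJ.hasDerivAt (J x : ℝ) : HasDerivAt (sigmaJ J) ((1 - 2 * x) / J) x := by
  have h := ((hasDerivAt_id x).mul ((hasDerivAt_id x).const_sub 1)).div_const J
  refine h.congr_deriv ?_
  simp only [id_eq]
  ring

theorem stmt3 (J : ℝ) (hJ : 0 < J) (ρ : ℝ) (hρ : ρ ∈ Set.Ioo (0:ℝ) 1) :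
    deriv (sigmaJ J) ρ =
      (deriv (deriv (fJ J)) ρ * (sigmaJ J ρ) ^ 2
        + (fJ J ρ + 2 * ρ * deriv (fJ J) ρ) * sigmaJ J ρ
        + ρ ^ 2 * fJ J ρ) / (ρ * fJ J ρ) := by
  obtain ⟨hρ0, hρ1⟩ := hρ
  rw [(sigmaJ.hasDerivAt J ρ).deriv, (fJ.hasDerivAt_deriv hρ1).deriv, fJ.deriv_eq hρ1]
  simp only [fJ, sigmaJ]
  rw [one_sub_rpow_eq_mul hρ1 J, one_sub_rpow_eq_mul hρ1 (J - 1), show J - 1 - 1 = J - 2 by ring]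
  have hA : (1 - ρ) ^ (J - 2) ≠ 0 := (Real.rpow_pos_of_pos (by linarith) _).ne'
  have h1ρ : 1 - ρ ≠ 0 := by linarith
  field_simp
  ring
end

section
/- Let f, b, ρ be as follows: f continuous on [0,1] with f > 0 on (0,1), b continuous with b(t) ≥ e^{-m}, and ρ̇ = -ρ f(ρ) b(t), ρ(0) = ρ₀ ∈ (0,1). Then for any ρ₁ ∈ (0, ρ₀), setting t₁ = e^m ∫_{ρ₁}^{ρ₀} dρ/(ρ f(ρ)) (assumed finite), one has ρ(t₁) ≤ ρ₁. -/
/-!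
While `ρ` stays in `(0, 1)` it is strictly decreasing, so if `ρ(t₁) > ρ₁` it stays in
`[ρ₁, ρ₀]` on `[0, t₁]`. There `t ↦ ∫_{ρ₁}^{ρ(t)} dx/(x f(x)) + e^{-m} t` has derivative
`e^{-m} - b(t) ≤ 0`, so the time spent on the way from `ρ₀` to `ρ(t₁)` is at most
`e^m ∫_{ρ(t₁)}^{ρ₀} dx/(x f(x)) < t₁`, a contradiction.
-/

open Set

theorem le_of_deriv_neg_at_level {ρ ρ' : ℝ → ℝ} {s t c : ℝ}
    (hρ : ∀ τ ∈ Icc s t, HasDerivAt ρ (ρ' τ) τ) (hc : ∀ τ ∈ Ico s t, ρ τ = c → ρ' τ < 0)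
    (hs : ρ s ≤ c) : ∀ τ ∈ Icc s t, ρ τ ≤ c :=
  image_le_of_deriv_right_lt_deriv_boundary' (B := fun _ => c) (B' := 0)
    (fun τ hτ => (hρ τ hτ).continuousAt.continuousWithinAt)
    (fun τ hτ => (hρ τ (Ico_subset_Icc_self hτ)).hasDerivWithinAt) hs continuousOn_const
    (fun _ _ => hasDerivWithinAt_const _ _ _) hc

theorem mem_Icc_of_deriv_neg {ρ ρ' : ℝ → ℝ} {s t a c : ℝ}
    (hρ : ∀ τ ∈ Icc s t, HasDerivAt ρ (ρ' τ) τ)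
    (hneg : ∀ τ ∈ Ico s t, ρ τ = a ∨ ρ τ = c → ρ' τ < 0)
    (hs : ρ s ≤ c) (ht : a < ρ t) : ∀ τ ∈ Icc s t, ρ τ ∈ Icc a c := by
  intro τ hτ
  refine ⟨?_, le_of_deriv_neg_at_level hρ (fun σ hσ hσc => hneg σ hσ (.inr hσc)) hs τ hτ⟩
  by_contra! hτa
  have hta := le_of_deriv_neg_at_level (s := τ) (fun σ hσ => hρ σ ⟨hτ.1.trans hσ.1, hσ.2⟩)
    (fun σ hσ hσa => hneg σ ⟨hτ.1.trans hσ.1, hσ.2⟩ (.inl hσa)) hτa.le t ⟨hτ.2, le_rfl⟩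
  exact hta.not_gt ht

theorem integral_lt_integral_of_lt_left {g : ℝ → ℝ} {a b c : ℝ} (hg : ContinuousOn g (Icc a c))
    (hpos : ∀ x ∈ Icc a c, 0 < g x) (hab : a < b) (hbc : b ≤ c) :
    ∫ x in b..c, g x < ∫ x in a..c, g x := by
  have hb : b ∈ Icc a c := ⟨hab.le, hbc⟩
  have hleft : IntervalIntegrable g MeasureTheory.volume a b :=
    (hg.mono (uIcc_subset_Icc (left_mem_Icc.2 (hab.le.trans hbc)) hb)).intervalIntegrable
  rw [← intervalIntegral.integral_add_adjacent_intervals hleft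
    (hg.mono (uIcc_subset_Icc hb (right_mem_Icc.2 (hab.le.trans hbc)))).intervalIntegrable]
  have := intervalIntegral.intervalIntegral_pos_of_pos_on hleft
    (fun x hx => hpos x ⟨hx.1.le, hx.2.le.trans hbc⟩) hab
  linarith

theorem mul_sub_le_integral_one_div {φ b ρ : ℝ → ℝ} {β a c s t : ℝ} (hst : s ≤ t)
    (hφc : ContinuousOn φ (Icc a c)) (hφ : ∀ x ∈ Icc a c, φ x ≠ 0)
    (hρ : ∀ τ ∈ Icc s t, ρ τ ∈ Icc a c)
    (hode : ∀ τ ∈ Icc s t, HasDerivAt ρ (-(φ (ρ τ) * b τ)) τ)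
    (hb : ∀ τ ∈ Icc s t, β ≤ b τ) :
    β * (t - s) ≤ ∫ x in ρ t..ρ s, 1 / φ x := by
  have hac : a ≤ c := (hρ s (left_mem_Icc.2 hst)).1.trans (hρ s (left_mem_Icc.2 hst)).2
  -- extend `1 / φ` continuously off `[a, c]` so that its primitive is differentiable everywhere
  set g : ℝ → ℝ := fun x => 1 / φ (projIcc a c hac x)
  have hgc : Continuous g :=
    continuous_const.div
      (hφc.comp_continuous (continuous_subtype_val.comp continuous_projIcc) fun x =>
        (projIcc a c hac x).2)
      fun x => hφ _ (projIcc a c hac x).2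
  have hg : ∀ x ∈ Icc a c, g x = 1 / φ x := fun x hx => by
    simp only [g, projIcc_of_mem hac hx]
  set G : ℝ → ℝ := fun y => ∫ x in a..y, g x
  have hW : ∀ τ ∈ Icc s t, HasDerivAt (fun τ => G (ρ τ) + β * τ) (β - b τ) τ := by
    intro τ hτ
    have hderiv := ((hgc.integral_hasStrictDerivAt a (ρ τ)).hasDerivAt.comp τ (hode τ hτ)).add
      ((hasDerivAt_id τ).const_mul β)
    refine hderiv.congr_deriv ?_
    rw [hg _ (hρ τ hτ)]
    field_simp [hφ _ (hρ τ hτ)]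
    ring
  have hanti : AntitoneOn (fun τ => G (ρ τ) + β * τ) (Icc s t) :=
    antitoneOn_of_hasDerivWithinAt_nonpos (convex_Icc s t)
      (fun τ hτ => (hW τ hτ).continuousAt.continuousWithinAt)
      (fun τ hτ => (hW τ (interior_subset hτ)).hasDerivWithinAt)
      fun τ hτ => sub_nonpos.2 (hb τ (interior_subset hτ))
  have hdecr := hanti (left_mem_Icc.2 hst) (right_mem_Icc.2 hst) hst
  calc β * (t - s) ≤ G (ρ s) - G (ρ t) := by simp only at hdecr; linarith
    _ = ∫ x in ρ t..ρ s, g x :=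
      intervalIntegral.integral_interval_sub_left (hgc.intervalIntegrable _ _)
        (hgc.intervalIntegrable _ _)
    _ = ∫ x in ρ t..ρ s, 1 / φ x :=
      intervalIntegral.integral_congr fun x hx =>
        hg x (uIcc_subset_Icc (hρ t (right_mem_Icc.2 hst)) (hρ s (left_mem_Icc.2 hst)) hx)

theorem stmt10_general (f b ρ : ℝ → ℝ) (m ρ₀ ρ₁ : ℝ)
    (hfc : ContinuousOn f (Set.Icc 0 1))
    (hfpos : ∀ x ∈ Set.Ioo (0:ℝ) 1, 0 < f x)
    (hb : ∀ t ≥ (0:ℝ), Real.exp (-m) ≤ b t)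
    (hρ0 : ρ 0 = ρ₀) (hρ₀ : ρ₀ ∈ Set.Ioo (0:ℝ) 1) (hρ₁ : ρ₁ ∈ Set.Ioo 0 ρ₀)
    (hode : ∀ t ≥ (0:ℝ), HasDerivAt ρ (-(ρ t * f (ρ t) * b t)) t) :
    ρ (Real.exp m * ∫ x in ρ₁..ρ₀, 1 / (x * f x)) ≤ ρ₁ := by
  obtain ⟨hρ₀0, hρ₀1⟩ := hρ₀
  obtain ⟨hρ₁0, hρ₁ρ₀⟩ := hρ₁
  have hφpos : ∀ x ∈ Icc ρ₁ ρ₀, 0 < x * f x := fun x hx =>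
    mul_pos (hρ₁0.trans_le hx.1) (hfpos x ⟨hρ₁0.trans_le hx.1, hx.2.trans_lt hρ₀1⟩)
  have hφc : ContinuousOn (fun x => x * f x) (Icc ρ₁ ρ₀) :=
    (continuousOn_id.mul hfc).mono (Icc_subset_Icc hρ₁0.le hρ₀1.le)
  set t₁ := Real.exp m * ∫ x in ρ₁..ρ₀, 1 / (x * f x)
  have ht₁ : 0 ≤ t₁ := mul_nonneg (Real.exp_pos m).le
    (intervalIntegral.integral_nonneg hρ₁ρ₀.le fun x hx => (one_div_pos.2 (hφpos x hx)).le)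
  have ht₁I : Real.exp (-m) * t₁ = ∫ x in ρ₁..ρ₀, 1 / (x * f x) := by
    rw [← mul_assoc, ← Real.exp_add, neg_add_cancel, Real.exp_zero, one_mul]
  by_contra! hlt
  have hstay : ∀ t ∈ Icc 0 t₁, ρ t ∈ Icc ρ₁ ρ₀ :=
    mem_Icc_of_deriv_neg (fun t ht => hode t ht.1)
      (fun t ht hlevel => neg_neg_of_pos <| mul_pos
        (hφpos _ (by rcases hlevel with h | h <;> simp [h, hρ₁ρ₀.le]))
        ((Real.exp_pos _).trans_le (hb t ht.1)))
      hρ0.le hlt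
  have htravel : Real.exp (-m) * (t₁ - 0) ≤ ∫ x in ρ t₁..ρ 0, 1 / (x * f x) :=
    mul_sub_le_integral_one_div (φ := fun x => x * f x) ht₁ hφc (fun x hx => (hφpos x hx).ne')
      hstay (fun t ht => hode t ht.1) (fun t ht => hb t ht.1)
  rw [hρ0, sub_zero, ht₁I] at htravel
  exact htravel.not_gt <| integral_lt_integral_of_lt_left
    (continuousOn_const.div hφc fun x hx => (hφpos x hx).ne')
    (fun x hx => one_div_pos.2 (hφpos x hx)) hlt (hstay t₁ (right_mem_Icc.2 ht₁)).2

theorem stmt10 (f b ρ : ℝ → ℝ) (m ρ₀ ρ₁ : ℝ)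
    (hfc : ContinuousOn f (Set.Icc 0 1))
    (hfpos : ∀ x ∈ Set.Ioo (0:ℝ) 1, 0 < f x)
    (hbc : Continuous b)
    (hb : ∀ t ≥ (0:ℝ), Real.exp (-m) ≤ b t)
    (hρ0 : ρ 0 = ρ₀) (hρ₀ : ρ₀ ∈ Set.Ioo (0:ℝ) 1) (hρ₁ : ρ₁ ∈ Set.Ioo 0 ρ₀)
    (hode : ∀ t ≥ (0:ℝ), HasDerivAt ρ (-(ρ t * f (ρ t) * b t)) t)
    (hint : IntervalIntegrable (fun x => 1 / (x * f x)) MeasureTheory.volume ρ₁ ρ₀) :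
    ρ (Real.exp m * ∫ x in ρ₁..ρ₀, 1 / (x * f x)) ≤ ρ₁ :=
  stmt10_general f b ρ m ρ₀ ρ₁ hfc hfpos hb hρ0 hρ₀ hρ₁ hode
end

section
/- Let σ : [0, ρ_max) → ℝ be a C¹ solution of σ'(ρ) = (f''(ρ)σ(ρ)² + (f(ρ)+2ρf'(ρ))σ(ρ) + ρ²f(ρ)) / (ρ f(ρ)) on (0, ρ_max) with σ continuous at 0, σ(0) = 0 and σ'(0) > 0, where f satisfies f > 0 on (0,1). Then σ(ρ) > 0 for all ρ ∈ (0, ρ_max). -/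
/-!
At a zero `ρ > 0` of `σ` the ODE reduces to `σ'(ρ) = ρ² f(ρ) / (ρ f(ρ)) = ρ > 0`, and at `0` the
right derivative is `s > 0`. Continuous induction from `0` shows that `σ ≥ 0`, since at a zero
the positive derivative pushes `σ` up to the right. Then `σ` cannot vanish at any `ρ > 0`,
because the positive derivative there would force `σ < 0` just to the left of `ρ`.
-/

open Set Filter Topology

theorem eventually_pos_of_hasDerivWithinAt_Ici {g : ℝ → ℝ} {x d : ℝ}
    (hg : HasDerivWithinAt g d (Ici x) x) (hd : 0 < d) (hx : g x = 0) :
    ∀ᶠ y in 𝓝[>] x, 0 < g y := by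
  have hslope := hasDerivWithinAt_iff_tendsto_slope.mp hg
  rw [Ici_sdiff_left] at hslope
  filter_upwards [hslope.eventually (eventually_gt_nhds hd), self_mem_nhdsWithin]
    with y hy (hxy : x < y)
  rw [slope_def_field, hx, sub_zero] at hy
  exact (div_pos_iff_of_pos_right (sub_pos.mpr hxy)).mp hy

theorem eventually_neg_of_hasDerivWithinAt_Iic {g : ℝ → ℝ} {x d : ℝ}
    (hg : HasDerivWithinAt g d (Iic x) x) (hd : 0 < d) (hx : g x = 0) :
    ∀ᶠ y in 𝓝[<] x, g y < 0 := by
  have hslope := hasDerivWithinAt_iff_tendsto_slope.mp hg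
  rw [Iic_sdiff_right] at hslope
  filter_upwards [hslope.eventually (eventually_gt_nhds hd), self_mem_nhdsWithin]
    with y hy (hyx : y < x)
  rw [slope_comm, slope_def_field, hx] at hy
  linarith [(div_pos_iff_of_pos_right (sub_pos.mpr hyx)).mp hy]

theorem nonneg_on_Icc_of_hasDerivWithinAt_pos_at_zeros {g : ℝ → ℝ} {a c : ℝ}
    (hg : ContinuousOn g (Icc a c)) (ha : 0 ≤ g a)
    (hzero : ∀ y ∈ Ico a c, g y = 0 → ∃ d, 0 < d ∧ HasDerivWithinAt g d (Ici y) y) :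
    ∀ y ∈ Icc a c, 0 ≤ g y := by
  have hclosed : IsClosed (g ⁻¹' Ici 0 ∩ Icc a c) := by
    rw [inter_comm]
    exact hg.preimage_isClosed_of_isClosed isClosed_Icc isClosed_Ici
  refine hclosed.Icc_subset_of_forall_mem_nhdsWithin ha ?_
  rintro y ⟨hy0 : 0 ≤ g y, hy⟩
  rcases hy0.lt_or_eq with hpos | hy_zero
  · have hnhds : 𝓝[>] y ≤ 𝓝[Icc a c] y := nhdsWithin_le_of_mem (Icc_mem_nhdsGT_of_mem hy)
    exact hnhds (hg y (Ico_subset_Icc_self hy) (Ici_mem_nhds hpos))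
  · obtain ⟨d, hd, hgd⟩ := hzero y hy hy_zero.symm
    exact (eventually_pos_of_hasDerivWithinAt_Ici hgd hd hy_zero.symm).mono fun _ h => h.le

theorem pos_on_Ioo_of_hasDerivAt_pos_at_zeros {g g' : ℝ → ℝ} {a b s : ℝ} (ha : g a = 0)
    (hs : 0 < s) (hga : HasDerivWithinAt g s (Ici a) a)
    (hg : ∀ x ∈ Ioo a b, HasDerivAt g (g' x) x) (hzero : ∀ x ∈ Ioo a b, g x = 0 → 0 < g' x) :
    ∀ x ∈ Ioo a b, 0 < g x := by
  have hnonneg : ∀ x ∈ Ioo a b, 0 ≤ g x := by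
    intro x hx
    refine nonneg_on_Icc_of_hasDerivWithinAt_pos_at_zeros ?_ ha.ge ?_ x (right_mem_Icc.2 hx.1.le)
    · intro y hy
      rcases hy.1.eq_or_lt with rfl | hay
      · exact hga.continuousWithinAt.mono Icc_subset_Ici_self
      · exact (hg y ⟨hay, hy.2.trans_lt hx.2⟩).continuousAt.continuousWithinAt
    · intro y hy hy0
      rcases hy.1.eq_or_lt with rfl | hay
      · exact ⟨s, hs, hga⟩
      · have hyb : y ∈ Ioo a b := ⟨hay, hy.2.trans hx.2⟩
        exact ⟨g' y, hzero y hyb hy0, (hg y hyb).hasDerivWithinAt⟩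
  intro x hx
  refine (hnonneg x hx).lt_of_ne' fun hx0 => ?_
  have hleft := eventually_neg_of_hasDerivWithinAt_Iic (hg x hx).hasDerivWithinAt
    (hzero x hx hx0) hx0
  obtain ⟨y, hy, hay, hyx⟩ := (hleft.and (Ioo_mem_nhdsLT hx.1)).exists
  exact (hnonneg y ⟨hay, hyx.trans hx.2⟩).not_gt hy

theorem stmt13_general (f σ : ℝ → ℝ) (ρmax : ℝ) (hρmax : ρmax ∈ Set.Ioc (0:ℝ) 1)
    (hfpos : ∀ x ∈ Set.Ioo (0:ℝ) 1, 0 < f x)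
    (hσ0 : σ 0 = 0) (s : ℝ) (hs : 0 < s)
    (hσ'0 : HasDerivWithinAt σ s (Set.Ici 0) 0)
    (hode : ∀ ρ ∈ Set.Ioo (0:ℝ) ρmax, HasDerivAt σ
      ((deriv (deriv f) ρ * σ ρ ^ 2 + (f ρ + 2 * ρ * deriv f ρ) * σ ρ
        + ρ ^ 2 * f ρ) / (ρ * f ρ)) ρ) :
    ∀ ρ ∈ Set.Ioo (0:ℝ) ρmax, 0 < σ ρ := by
  refine pos_on_Ioo_of_hasDerivAt_pos_at_zeros hσ0 hs hσ'0 hode fun ρ hρ hσρ => ?_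
  have hfρ : 0 < f ρ := hfpos ρ ⟨hρ.1, hρ.2.trans_le hρmax.2⟩
  have hrate : (deriv (deriv f) ρ * 0 ^ 2 + (f ρ + 2 * ρ * deriv f ρ) * 0 + ρ ^ 2 * f ρ)
      / (ρ * f ρ) = ρ := by
    field_simp [hρ.1.ne', hfρ.ne']
    ring
  rw [hσρ, hrate]
  exact hρ.1

theorem stmt13 (f σ : ℝ → ℝ) (ρmax : ℝ) (hρmax : ρmax ∈ Set.Ioc (0:ℝ) 1)
    (hfpos : ∀ x ∈ Set.Ioo (0:ℝ) 1, 0 < f x)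
    (hσc : ContinuousWithinAt σ (Set.Ici 0) 0)
    (hσ0 : σ 0 = 0) (s : ℝ) (hs : 0 < s)
    (hσ'0 : HasDerivWithinAt σ s (Set.Ici 0) 0)
    (hode : ∀ ρ ∈ Set.Ioo (0:ℝ) ρmax, HasDerivAt σ
      ((deriv (deriv f) ρ * σ ρ ^ 2 + (f ρ + 2 * ρ * deriv f ρ) * σ ρ
        + ρ ^ 2 * f ρ) / (ρ * f ρ)) ρ) :
    ∀ ρ ∈ Set.Ioo (0:ℝ) ρmax, 0 < σ ρ :=
  stmt13_general f σ ρmax hρmax hfpos hσ0 s hs hσ'0 hode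
end

section
/- Let f be C³ near 0 with f(0) = 0, f'(0) > 0, f''(0) < 0, and let d̃ be a C¹ trajectory satisfying d̃'(ρ) = (f''(ρ)d̃(ρ)² + (f(ρ)+2ρf'(ρ))d̃(ρ) + ρ²f(ρ)) / (ρ f(ρ)) on (0,ε) with d̃(0) = 0 and d̃'(0) existing. Then d̃'(0) = 0 or d̃'(0) = -2f'(0)/f''(0). -/
/-!
Both `d ρ / ρ` and, by l'Hôpital's rule, `d' ρ` tend to `d'(0) = L` as `ρ → 0⁺`. Dividing numerator
and denominator of the right-hand side of the ODE by `ρ²` expresses it through `d ρ / ρ → L`,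
`f ρ / ρ → f'(0)`, `f' → f'(0)`, `f'' → f''(0)` and `f → 0`, so `L` is a fixed point of
`L ↦ (f''(0) L² + 3 f'(0) L) / f'(0)`, whose roots are `0` and `-2 f'(0) / f''(0)`.
-/

open Set Filter Topology

lemma tendsto_div_nhdsGT_zero_of_hasDerivWithinAt {g : ℝ → ℝ} {L : ℝ} (hg0 : g 0 = 0)
    (hg : HasDerivWithinAt g L (Ici 0) 0) :
    Tendsto (fun ρ => g ρ / ρ) (𝓝[>] 0) (𝓝 L) := by
  have hslope := hasDerivWithinAt_iff_tendsto_slope.mp hg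
  rw [Ici_sdiff_left] at hslope
  refine hslope.congr fun ρ => ?_
  simp [slope_def_field, hg0]

lemma eq_of_tendsto_div_of_hasDerivAt {d F : ℝ → ℝ} {ε L M : ℝ} (hε : 0 < ε)
    (hd : ∀ ρ ∈ Ioo (0 : ℝ) ε, HasDerivAt d (F ρ) ρ)
    (hL : Tendsto (fun ρ => d ρ / ρ) (𝓝[>] 0) (𝓝 L))
    (hM : Tendsto F (𝓝[>] 0) (𝓝 M)) : L = M := by
  have hid : Tendsto (fun ρ : ℝ => ρ) (𝓝[>] 0) (𝓝 0) := tendsto_nhdsWithin_of_tendsto_nhds tendsto_id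
  have hd0 : Tendsto d (𝓝[>] 0) (𝓝 0) := by
    refine (mul_zero L ▸ hL.mul hid).congr' ?_
    filter_upwards [self_mem_nhdsWithin] with ρ (hρ : 0 < ρ)
    exact div_mul_cancel₀ _ hρ.ne'
  have hlhopital : Tendsto (fun ρ => d ρ / ρ) (𝓝[>] 0) (𝓝 M) :=
    HasDerivAt.lhopital_zero_right_on_Ioo hε hd (fun x _ => hasDerivAt_id x)
      (fun _ _ => one_ne_zero) hd0 hid (by simpa using hM)
  exact tendsto_nhds_unique hL hlhopital

lemma eq_zero_or_eq_neg_two_mul_div_of_eq_div {a b L : ℝ} (ha : a ≠ 0) (hb : b ≠ 0)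
    (h : L = (b * L ^ 2 + 3 * a * L) / a) : L = 0 ∨ L = -2 * a / b := by
  rw [eq_div_iff ha] at h
  have hfactor : L * (b * L + 2 * a) = 0 := by linear_combination -h
  refine (mul_eq_zero.mp hfactor).imp id fun hL => ?_
  rw [eq_div_iff hb]
  linarith

theorem stmt14 (f d : ℝ → ℝ) (ε L : ℝ) (hε : 0 < ε)
    (hf : ContDiffOn ℝ 3 f (Set.Ioo (-ε) ε))
    (hf0 : f 0 = 0) (hfd0 : 0 < deriv f 0) (hfdd0 : deriv (deriv f) 0 < 0)
    (hd0 : d 0 = 0)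
    (hode : ∀ ρ ∈ Set.Ioo (0:ℝ) ε, HasDerivAt d
      ((deriv (deriv f) ρ * d ρ ^ 2 + (f ρ + 2 * ρ * deriv f ρ) * d ρ
        + ρ ^ 2 * f ρ) / (ρ * f ρ)) ρ)
    (hL : HasDerivWithinAt d L (Set.Ici 0) 0) :
    L = 0 ∨ L = -2 * deriv f 0 / deriv (deriv f) 0 := by
  have hnhds : Ioo (-ε) ε ∈ 𝓝 (0 : ℝ) := Ioo_mem_nhds (by linarith) hε
  have hf' : ContDiffOn ℝ 2 (deriv f) (Ioo (-ε) ε) := hf.deriv_of_isOpen isOpen_Ioo (by norm_num)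
  have hf'' : ContDiffOn ℝ 1 (deriv (deriv f)) (Ioo (-ε) ε) :=
    hf'.deriv_of_isOpen isOpen_Ioo (by norm_num)
  have tendsto_at_zero {g : ℝ → ℝ} (hg : ContinuousOn g (Ioo (-ε) ε)) :
      Tendsto g (𝓝[>] 0) (𝓝 (g 0)) :=
    tendsto_nhdsWithin_of_tendsto_nhds (hg.continuousAt hnhds)
  have hdiv_d : Tendsto (fun ρ => d ρ / ρ) (𝓝[>] 0) (𝓝 L) :=
    tendsto_div_nhdsGT_zero_of_hasDerivWithinAt hd0 hL
  have hdiv_f : Tendsto (fun ρ => f ρ / ρ) (𝓝[>] 0) (𝓝 (deriv f 0)) :=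
    tendsto_div_nhdsGT_zero_of_hasDerivWithinAt hf0
      ((hf.differentiableOn (by norm_num)).differentiableAt hnhds).hasDerivAt.hasDerivWithinAt
  have hf_lim : Tendsto f (𝓝[>] 0) (𝓝 0) := by simpa [hf0] using tendsto_at_zero hf.continuousOn
  have hrhs := ((((tendsto_at_zero hf''.continuousOn).mul (hdiv_d.pow 2)).add
    ((hdiv_f.add ((tendsto_at_zero hf'.continuousOn).const_mul 2)).mul hdiv_d)).add hf_lim).div
      hdiv_f hfd0.ne'
  refine eq_zero_or_eq_neg_two_mul_div_of_eq_div hfd0.ne' hfdd0.ne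
    (eq_of_tendsto_div_of_hasDerivAt hε hode hdiv_d (hrhs.congr' ?_ |>.trans_eq ?_))
  · filter_upwards [self_mem_nhdsWithin] with ρ (hρ : 0 < ρ)
    rcases eq_or_ne (f ρ) 0 with hfρ | hfρ
    · simp [hfρ]
    · simp only [Pi.div_apply]
      field_simp
  · ring_nf
end

section
/- Let α ∈ ℝ, β > 0, and consider s(ρ) solving the equation s'(ρ) = -(2/β)(s(ρ)/ρ)² + 3(s(ρ)/ρ) + R(ρ, s(ρ)) on (0, ε], where |R| ≤ ε. If δ = √ε and ε is sufficiently small, then whenever s(ρ) = (1-δ)βρ one has s'(ρ) > β, and whenever s(ρ) = (1+δ)βρ one has s'(ρ) < β. Consequently any solution with (1-δ)βρ₀ ≤ s(ρ₀) ≤ (1+δ)βρ₀ for some ρ₀ ∈ (0,ε] remains in the cone (1-δ)βρ ≤ s(ρ) ≤ (1+δ)βρ for ρ ∈ [ρ₀, ε]. -/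
/-!
Writing `s = (1 + t) β ρ`, the quadratic part of the right-hand side equals `β (1 - t - 2t²)`, so
on the lower ray `t = -δ` the slope exceeds `β` by `βδ + O(δ²)` and on the upper ray `t = δ` it
falls short of `β` by as much; with `|R| ≤ ε = δ²` these margins survive for small `ε`. Hence
the graph of `s` can never cross either ray outward, which traps it in the cone.
-/

open Set

section Barrier

variable {f f' : ℝ → ℝ} {a b c : ℝ}

theorem le_mul_of_deriv_lt_at_contact (hf : ContinuousOn f (Icc a b))
    (hf' : ∀ x ∈ Ico a b, HasDerivWithinAt f (f' x) (Ici x) x) (ha : f a ≤ c * a)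
    (hcontact : ∀ x ∈ Ico a b, f x = c * x → f' x < c) :
    ∀ x ∈ Icc a b, f x ≤ c * x :=
  image_le_of_deriv_right_lt_deriv_boundary hf hf' ha
    (fun x => by simpa using (hasDerivAt_id x).const_mul c) hcontact

theorem mul_le_of_lt_deriv_at_contact (hf : ContinuousOn f (Icc a b))
    (hf' : ∀ x ∈ Ico a b, HasDerivWithinAt f (f' x) (Ici x) x) (ha : c * a ≤ f a)
    (hcontact : ∀ x ∈ Ico a b, f x = c * x → c < f' x) :
    ∀ x ∈ Icc a b, c * x ≤ f x := by
  intro x hx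
  have := le_mul_of_deriv_lt_at_contact (f := -f) (f' := -f') (c := -c) hf.neg
    (fun y hy => (hf' y hy).neg) (by simpa using ha)
    (fun y hy hy' => by simpa using hcontact y hy (by simpa using hy')) x hx
  simpa using this

end Barrier

section Field

variable {β δ r ρ x : ℝ}

theorem field_at_slope (hβ : β ≠ 0) (t : ℝ) :
    -(2 / β) * ((1 + t) * β) ^ 2 + 3 * ((1 + t) * β) = β * (1 - t - 2 * t ^ 2) := by
  field_simp
  ring

theorem lt_field_of_eq_lower_ray (hβ : 0 < β) (hδ : 0 < δ) (hδβ : (2 * β + 1) * δ < β)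
    (hr : |r| ≤ δ ^ 2) (hρ : ρ ≠ 0) (hx : x = (1 - δ) * β * ρ) :
    β < -(2 / β) * (x / ρ) ^ 2 + 3 * (x / ρ) + r := by
  have hslope : x / ρ = (1 + -δ) * β := by rw [hx]; field_simp; ring
  rw [hslope, field_at_slope hβ.ne']
  nlinarith [(abs_le.1 hr).1, mul_pos hδ (sub_pos.2 hδβ)]

theorem field_lt_of_eq_upper_ray (hβ : 0 < β) (hδ : 0 < δ) (hδβ : δ ≤ β)
    (hr : |r| ≤ δ ^ 2) (hρ : ρ ≠ 0) (hx : x = (1 + δ) * β * ρ) :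
    -(2 / β) * (x / ρ) ^ 2 + 3 * (x / ρ) + r < β := by
  have hslope : x / ρ = (1 + δ) * β := by rw [hx]; field_simp
  rw [hslope, field_at_slope hβ.ne']
  nlinarith [(abs_le.1 hr).2, mul_pos (mul_pos hδ hβ) hδ]

end Field

theorem stmt15 (β : ℝ) (hβ : 0 < β) :
    ∃ ε₀ > (0:ℝ), ∀ ε : ℝ, 0 < ε → ε < ε₀ →
      ∀ (s : ℝ → ℝ) (R : ℝ → ℝ → ℝ),
        (∀ ρ x, |R ρ x| ≤ ε) →
        (∀ ρ ∈ Set.Ioc (0:ℝ) ε, HasDerivAt s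
          (-(2 / β) * (s ρ / ρ) ^ 2 + 3 * (s ρ / ρ) + R ρ (s ρ)) ρ) →
        (∀ ρ ∈ Set.Ioc (0:ℝ) ε,
            s ρ = (1 - Real.sqrt ε) * β * ρ → β < deriv s ρ) ∧
        (∀ ρ ∈ Set.Ioc (0:ℝ) ε,
            s ρ = (1 + Real.sqrt ε) * β * ρ → deriv s ρ < β) ∧
        (∀ ρ₀ ∈ Set.Ioc (0:ℝ) ε,
            (1 - Real.sqrt ε) * β * ρ₀ ≤ s ρ₀ →
            s ρ₀ ≤ (1 + Real.sqrt ε) * β * ρ₀ →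
            ∀ ρ ∈ Set.Icc ρ₀ ε,
              (1 - Real.sqrt ε) * β * ρ ≤ s ρ ∧ s ρ ≤ (1 + Real.sqrt ε) * β * ρ) := by
  refine ⟨(β / (2 * β + 1)) ^ 2, by positivity, fun ε hε hεlt s R hR hs => ?_⟩
  set δ := Real.sqrt ε
  have hδ : 0 < δ := Real.sqrt_pos.2 hε
  have hδβ : (2 * β + 1) * δ < β := by
    rw [← lt_div_iff₀' (by positivity)]
    exact Real.sqrt_lt_sqrt hε.le hεlt |>.trans_eq (Real.sqrt_sq (by positivity))
  have hRδ : ∀ ρ x, |R ρ x| ≤ δ ^ 2 := by rw [Real.sq_sqrt hε.le]; exact hR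
  have lower : ∀ ρ ∈ Ioc 0 ε, s ρ = (1 - δ) * β * ρ → β < deriv s ρ := fun ρ hρ h =>
    (hs ρ hρ).deriv ▸ lt_field_of_eq_lower_ray hβ hδ hδβ (hRδ _ _) hρ.1.ne' h
  have upper : ∀ ρ ∈ Ioc 0 ε, s ρ = (1 + δ) * β * ρ → deriv s ρ < β := fun ρ hρ h =>
    (hs ρ hρ).deriv ▸ field_lt_of_eq_upper_ray hβ hδ (by nlinarith) (hRδ _ _) hρ.1.ne' h
  refine ⟨lower, upper, fun ρ₀ hρ₀ hlo hhi => ?_⟩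
  have hIcc : Icc ρ₀ ε ⊆ Ioc 0 ε := fun x hx => ⟨hρ₀.1.trans_le hx.1, hx.2⟩
  have hcont : ContinuousOn s (Icc ρ₀ ε) := fun x hx =>
    (hs x (hIcc hx)).continuousAt.continuousWithinAt
  have hderiv : ∀ x ∈ Ico ρ₀ ε, HasDerivWithinAt s (deriv s x) (Ici x) x := fun x hx =>
    (hs x (hIcc (Ico_subset_Icc_self hx))).differentiableAt.hasDerivAt.hasDerivWithinAt
  have hδβ_pos : 0 < δ * β := mul_pos hδ hβ
  intro ρ hρ
  constructor
  · refine mul_le_of_lt_deriv_at_contact hcont hderiv hlo (fun x hx h => ?_) ρ hρ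
    linarith [lower x (hIcc (Ico_subset_Icc_self hx)) h]
  · refine le_mul_of_deriv_lt_at_contact hcont hderiv hhi (fun x hx h => ?_) ρ hρ
    linarith [upper x (hIcc (Ico_subset_Icc_self hx)) h]
end
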